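/- arXiv:2104.00552 — 3 statements merged into one kernel-verified Lean document; each statement's English description precedes it below -/
import Mathlib

section
/- For all n ≥ 1 and p ≥ 0, A(P_n ∪ (p+1)K_1) < A(P_{n+1} ∪ pK_1). -/
/-
If `v` is an isolated vertex of `G`, a stable partition of `G` is the same as a pair `(Q, c)`
where `Q` is a stable partition of `G` having `{v}` as a part and `c` is a part of `Q` into
which `v` is merged (`c = {v}` meaning that `v` stays alone). For `u ≠ v` the stable partitions
of `G + uv` are the pairs with `u ∉ c`. With `k = |Q| - 1` and `N` the number of such `Q`,
  `B(G) = Σ (k + 1)`, `T(G) = Σ (k² + k + 1)`, `B(G + uv) = Σ k`, `T(G + uv) = Σ (k² + 1)`,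
so `T(G) B(G + uv) < T(G + uv) B(G)` reduces to `(Σ k)² < N Σ k² + N²`: Cauchy–Schwarz.
Joining the end of the path to an isolated vertex turns `P_n ∪ (p+1)K₁` into `P_{n+1} ∪ pK₁`.
-/

open Finset SimpleGraph

/-- A coloring partition of `G`: a partition of the vertex set into (nonempty)
independent (stable) sets. -/
def IsStablePartition {V : Type*} [Fintype V] [DecidableEq V] (G : SimpleGraph V)
    (P : Finpartition (univ : Finset V)) : Prop :=
  ∀ t ∈ P.parts, ∀ u ∈ t, ∀ v ∈ t, ¬ G.Adj u v

open scoped Classical in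
/-- `colB G` : the number of coloring partitions of `G`. -/
noncomputable def colB {V : Type*} [Fintype V] [DecidableEq V] (G : SimpleGraph V) : ℕ :=
  (univ.filter (IsStablePartition G)).card

open scoped Classical in
/-- `colT G` : the total number of blocks summed over all coloring partitions of `G`. -/
noncomputable def colT {V : Type*} [Fintype V] [DecidableEq V] (G : SimpleGraph V) : ℕ :=
  ∑ P ∈ univ.filter (IsStablePartition G), P.parts.card

/-- `colA G = colT G / colB G` : the average number of blocks. -/
noncomputable def colA {V : Type*} [Fintype V] [DecidableEq V] (G : SimpleGraph V) : ℚ :=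
  (colT G : ℚ) / (colB G : ℚ)

/-- The `n`-th Bell number: the number of partitions of an `n`-element set. -/
noncomputable def bell (n : ℕ) : ℕ :=
  Fintype.card (Finpartition (univ : Finset (Fin n)))

/-- The disjoint union of `G` with `p` isolated vertices (`G ∪ pK₁`). -/
def unionIsolated {V : Type*} (G : SimpleGraph V) (p : ℕ) : SimpleGraph (V ⊕ Fin p) :=
  SimpleGraph.fromRel (fun x y => ∃ a b, x = Sum.inl a ∧ y = Sum.inl b ∧ G.Adj a b)

/-- `Hgraph n r` : the graph obtained from the disjoint union of the cycle `C_n` and the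
path `P_r` by adding an edge between one endpoint of the path (vertex `0`) and one vertex
of the cycle (vertex `0`). -/
def Hgraph (n r : ℕ) : SimpleGraph (Fin n ⊕ Fin r) :=
  SimpleGraph.fromRel (fun x y =>
    (∃ a b, x = Sum.inl a ∧ y = Sum.inl b ∧ (cycleGraph n).Adj a b) ∨
    (∃ a b, x = Sum.inr a ∧ y = Sum.inr b ∧ (pathGraph r).Adj a b) ∨
    (∃ (a : Fin n) (b : Fin r), a.val = 0 ∧ b.val = 0 ∧ x = Sum.inl a ∧ y = Sum.inr b))

namespace Finpartition

variable {α : Type*} [Fintype α] [DecidableEq α] {P Q : Finpartition (univ : Finset α)}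
  {a : α} {b c c' x y t : Finset α}

theorem ext_of_part_eq (h : ∀ a, P.part a = Q.part a) : P = Q := by
  suffices key : ∀ {P Q : Finpartition (univ : Finset α)}, (∀ a, P.part a = Q.part a) →
      P.parts ⊆ Q.parts from Finpartition.ext ((key h).antisymm (key fun a => (h a).symm))
  intro P Q h t ht
  obtain ⟨a, ha⟩ := P.nonempty_of_mem_parts ht
  rw [← P.part_eq_of_mem ht ha, h]
  exact Q.part_mem.2 (mem_univ a)

/-- `P.carve x` makes `x` a part of `P` and removes its elements from the other parts,
dropping those that become empty. -/
def carve (P : Finpartition (univ : Finset α)) (x : Finset α) : Finpartition (univ : Finset α) :=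
  ofErase (insert x (P.parts.image (· \ x)))
    ((P.disjoint.image_finset_of_le fun _ ↦ sdiff_le).supIndep.insert <| by
      rw [sup_image, Function.id_comp, Finset.sup_sdiff_right]
      exact disjoint_sdiff_self_right)
    (by
      rw [sup_insert, sup_image, Function.id_comp, Finset.sup_sdiff_right, ← Function.id_def,
        P.sup_parts]
      simp)

theorem mem_carve : t ∈ (P.carve x).parts ↔ t ≠ ∅ ∧ (t = x ∨ ∃ d ∈ P.parts, d \ x = t) := by
  simp [carve]

theorem part_carve : (P.carve x).part a = if a ∈ x then x else P.part a \ x := by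
  refine (P.carve x).part_eq_of_mem (mem_carve.2 ⟨?_, ?_⟩) ?_ <;> split_ifs with ha
  · exact ne_empty_of_mem ha
  · exact ne_empty_of_mem (mem_sdiff.2 ⟨P.mem_part (mem_univ a), ha⟩)
  · exact .inl rfl
  · exact .inr ⟨_, P.part_mem.2 (mem_univ a), rfl⟩
  · exact ha
  · exact mem_sdiff.2 ⟨P.mem_part (mem_univ a), ha⟩

theorem part_carve_of_mem (ha : a ∈ x) : (P.carve x).part a = x := by
  rw [part_carve, if_pos ha]

theorem carve_empty : P.carve ∅ = P :=
  ext_of_part_eq fun a => by simp [part_carve]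

theorem carve_of_mem (hx : x ∈ P.parts) : P.carve x = P := by
  refine ext_of_part_eq fun a => ?_
  rw [part_carve]
  split_ifs with ha
  · exact (P.part_eq_of_mem hx ha).symm
  · refine (P.disjoint (P.part_mem.2 (mem_univ a)) hx fun h => ha ?_).sdiff_eq_left
    exact h ▸ P.mem_part (mem_univ a)

theorem carve_carve_of_subset (h : y ⊆ x) : (P.carve y).carve x = P.carve x := by
  refine ext_of_part_eq fun a => ?_
  by_cases ha : a ∈ x
  · simp [part_carve, ha]
  · have : a ∉ y := fun h' => ha (h h')
    simp [part_carve, ha, this, sdiff_sdiff_left, union_eq_right.2 h]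

theorem carve_carve_sdiff (h : y ⊆ x) : (P.carve x).carve y = (P.carve (x \ y)).carve y := by
  refine ext_of_part_eq fun a => ?_
  by_cases ha : a ∈ y
  · simp [part_carve, ha]
  · by_cases hx : a ∈ x
    · simp [part_carve, ha, hx]
    · simp [part_carve, ha, hx, sdiff_sdiff_left, union_eq_left.2 h]

theorem carve_union_carve (hb : b ∈ P.parts) (hc : c ∈ P.parts) :
    (P.carve (b ∪ c)).carve b = P := by
  rw [carve_carve_sdiff subset_union_left, union_sdiff_left]
  obtain rfl | hbc := eq_or_ne b c
  · rw [Finset.sdiff_self, carve_empty, carve_of_mem hb]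
  · have hcb : Disjoint c b := P.disjoint hc hb hbc.symm
    rw [hcb.sdiff_eq_left, carve_of_mem hc, carve_of_mem hb]

theorem eq_of_union_eq_union (hb : b ∈ P.parts) (hc : c ∈ P.parts) (hc' : c' ∈ P.parts)
    (h : b ∪ c = b ∪ c') : c = c' := by
  have key : ∀ {c c'}, c ∈ P.parts → c' ∈ P.parts → b ∪ c = b ∪ c' → c' ≠ b → c = c' := by
    intro c c' hc hc' h hc'b
    obtain ⟨a, ha⟩ := P.nonempty_of_mem_parts hc
    rcases mem_union.1 (h ▸ mem_union_right b ha) with hab | hac'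
    · obtain rfl := P.eq_of_mem_parts hc hb ha hab
      obtain ⟨a', ha'⟩ := P.nonempty_of_mem_parts hc'
      rw [union_self] at h
      exact absurd (P.eq_of_mem_parts hc' hb ha' (h ▸ mem_union_right c ha')) hc'b
    · exact P.eq_of_mem_parts hc hc' ha hac'
  obtain rfl | hc'b := eq_or_ne c' b
  · obtain rfl | hcb := eq_or_ne c c'
    · rfl
    · exact (key hc' hc h.symm hcb).symm
  · exact key hc hc' h hc'b

theorem parts_carve_union (hb : b ∈ P.parts) (hc : c ∈ P.parts) (hbc : b ≠ c) :
    (P.carve (b ∪ c)).parts = insert (b ∪ c) ((P.parts.erase b).erase c) := by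
  have disjoint_union {d} (hd : d ∈ P.parts) (hdb : d ≠ b) (hdc : d ≠ c) : Disjoint d (b ∪ c) :=
    disjoint_union_right.2 ⟨P.disjoint hd hb hdb, P.disjoint hd hc hdc⟩
  ext t
  simp only [mem_carve, mem_insert, mem_erase]
  constructor
  · rintro ⟨ht, rfl | ⟨d, hd, rfl⟩⟩
    · exact .inl rfl
    · have hdb : d ≠ b := by rintro rfl; simp at ht
      have hdc : d ≠ c := by rintro rfl; simp at ht
      rw [(disjoint_union hd hdb hdc).sdiff_eq_left]
      exact .inr ⟨hdc, hdb, hd⟩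
  · rintro (rfl | ⟨htc, htb, ht⟩)
    · exact ⟨(P.nonempty_of_mem_parts hb).mono subset_union_left |>.ne_empty, .inl rfl⟩
    · exact ⟨P.ne_empty ht, .inr ⟨t, ht, (disjoint_union ht htb htc).sdiff_eq_left⟩⟩

theorem card_parts_carve_union (hb : b ∈ P.parts) (hc : c ∈ P.parts) (hbc : b ≠ c) :
    #(P.carve (b ∪ c)).parts = #(P.parts.erase b) := by
  have hbc_notMem : b ∪ c ∉ (P.parts.erase b).erase c := fun h => by
    obtain ⟨-, hne, hmem⟩ := mem_erase.1 h |>.imp_right mem_erase.1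
    obtain ⟨a, ha⟩ := P.nonempty_of_mem_parts hb
    exact hne (P.eq_of_mem_parts hmem hb (mem_union_left c ha) ha)
  rw [parts_carve_union hb hc hbc, card_insert_of_notMem hbc_notMem,
    card_erase_add_one (mem_erase.2 ⟨hbc.symm, hc⟩)]

theorem exists_mem_carve_singleton_union_eq : ∃ c ∈ (P.carve {a}).parts, {a} ∪ c = P.part a := by
  have ha : {a} ⊆ P.part a := singleton_subset_iff.2 (P.mem_part (mem_univ a))
  by_cases h : P.part a \ {a} = ∅
  · refine ⟨{a}, mem_carve.2 ⟨singleton_ne_empty a, .inl rfl⟩, ?_⟩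
    rw [union_self]
    exact ha.antisymm (sdiff_eq_empty_iff_subset.1 h)
  · exact ⟨P.part a \ {a}, mem_carve.2 ⟨h, .inr ⟨_, P.part_mem.2 (mem_univ a), rfl⟩⟩,
      union_sdiff_of_subset ha⟩

theorem card_filter_notMem_parts (a : α) : #(P.parts.filter (a ∉ ·)) + 1 = #P.parts := by
  have : P.parts.filter (a ∉ ·) = P.parts.erase (P.part a) := by
    ext t
    simp only [mem_filter, mem_erase]
    constructor
    · rintro ⟨ht, hat⟩
      exact ⟨fun h => hat (h ▸ P.mem_part (mem_univ a)), ht⟩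
    · rintro ⟨hne, ht⟩
      exact ⟨ht, fun hat => hne (P.part_eq_of_mem ht hat).symm⟩
  rw [this, card_erase_add_one (P.part_mem.2 (mem_univ a))]

theorem sum_card_parts_carve_union {S : Finset (Finset α)} (hb : b ∈ P.parts) (hS : S ⊆ P.parts)
    (hbS : b ∈ S) : ∑ c ∈ S, #(P.carve (b ∪ c)).parts = #S * #(P.parts.erase b) + 1 := by
  rw [← add_sum_erase S _ hbS, union_self, carve_of_mem hb,
    sum_congr rfl fun c hc => card_parts_carve_union hb (hS (mem_of_mem_erase hc))
      (ne_of_mem_erase hc).symm,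
    sum_const, smul_eq_mul, ← card_erase_add_one hb, ← card_erase_add_one hbS]
  ring

end Finpartition

theorem sum_mul_sum_lt_sum_mul_sum {ι : Type*} {s : Finset ι} (hs : s.Nonempty) (k : ι → ℕ) :
    (∑ i ∈ s, ((k i + 1) * k i + 1)) * ∑ i ∈ s, k i <
      (∑ i ∈ s, (k i * k i + 1)) * ∑ i ∈ s, (k i + 1) := by
  have cauchy_schwarz := sq_sum_le_card_mul_sum_sq (s := s) (f := k)
  have hcard := hs.card_pos
  simp only [sum_add_distrib, add_mul, one_mul, sum_const, smul_eq_mul, mul_one, sq] at *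
  nlinarith

section StablePartitions

open Finpartition
open scoped Classical

variable {V : Type*} [Fintype V] [DecidableEq V] {G : SimpleGraph V} {u v : V}
  {P : Finpartition (univ : Finset V)} {x : Finset V}

theorem isStablePartition_bot (G : SimpleGraph V) : IsStablePartition G ⊥ := by
  intro t ht a ha b hb
  obtain ⟨c, -, rfl⟩ := Finpartition.mem_bot_iff.1 ht
  rw [mem_singleton] at ha hb
  subst ha hb
  exact G.irrefl

theorem IsStablePartition.carve (hP : IsStablePartition G P)
    (hx : ∀ a ∈ x, ∀ b ∈ x, ¬G.Adj a b) : IsStablePartition G (P.carve x) := by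
  intro t ht
  obtain ⟨-, rfl | ⟨d, hd, rfl⟩⟩ := mem_carve.1 ht
  · exact hx
  · exact fun a ha b hb => hP d hd a (mem_sdiff.1 ha).1 b (mem_sdiff.1 hb).1

theorem isStablePartition_sup_edge_iff (huv : u ≠ v) :
    IsStablePartition (G ⊔ edge u v) P ↔ IsStablePartition G P ∧ u ∉ P.part v := by
  constructor
  · intro h
    refine ⟨fun t ht a ha b hb hab => h t ht a ha b hb (.inl hab), fun hu => ?_⟩
    exact h _ (P.part_mem.2 (mem_univ v)) u hu v (P.mem_part (mem_univ v))
      (.inr ((edge_adj ..).2 ⟨.inl ⟨rfl, rfl⟩, huv⟩))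
  · rintro ⟨hP, hu⟩ t ht a ha b hb (hab | hab)
    · exact hP t ht a ha b hb hab
    · obtain ⟨⟨rfl, rfl⟩ | ⟨rfl, rfl⟩, -⟩ := (edge_adj ..).1 hab
      · exact hu (P.part_eq_of_mem ht hb ▸ ha)
      · exact hu (P.part_eq_of_mem ht ha ▸ hb)

noncomputable def stablePartitionsWithSingleton (G : SimpleGraph V) (v : V) :
    Finset (Finpartition (univ : Finset V)) :=
  univ.filter fun Q => IsStablePartition G Q ∧ {v} ∈ Q.parts

theorem mem_stablePartitionsWithSingleton {Q : Finpartition (univ : Finset V)} :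
    Q ∈ stablePartitionsWithSingleton G v ↔ IsStablePartition G Q ∧ {v} ∈ Q.parts := by
  simp [stablePartitionsWithSingleton]

theorem bot_mem_stablePartitionsWithSingleton :
    ⊥ ∈ stablePartitionsWithSingleton G v :=
  mem_stablePartitionsWithSingleton.2
    ⟨isStablePartition_bot G, Finpartition.mem_bot_iff.2 ⟨v, mem_univ v, rfl⟩⟩

theorem sum_stablePartitions_eq_sum_carve {M : Type*} [AddCommMonoid M] (hv : ∀ x, ¬G.Adj v x)
    (f : Finpartition (univ : Finset V) → M) :
    ∑ P ∈ univ.filter (IsStablePartition G), f P =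
      ∑ Q ∈ stablePartitionsWithSingleton G v, ∑ c ∈ Q.parts, f (Q.carve ({v} ∪ c)) := by
  have mem_sigma_iff {Q c} : (⟨Q, c⟩ : Σ _, Finset V) ∈
      (stablePartitionsWithSingleton G v).sigma (·.parts) ↔
        (IsStablePartition G Q ∧ {v} ∈ Q.parts) ∧ c ∈ Q.parts := by
    rw [mem_sigma, mem_stablePartitionsWithSingleton]
  have v_mem (c : Finset V) : v ∈ {v} ∪ c := mem_union_left c (mem_singleton_self v)
  rw [sum_sigma']
  symm
  refine sum_nbij (fun Qc => Qc.1.carve ({v} ∪ Qc.2)) ?_ ?_ ?_ fun _ _ => rfl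
  · rintro ⟨Q, c⟩ h
    obtain ⟨⟨hQ, -⟩, hc⟩ := mem_sigma_iff.1 h
    refine mem_filter.2 ⟨mem_univ _, hQ.carve fun a ha b hb hab => ?_⟩
    rcases mem_union.1 ha with ha | ha
    · exact hv b (mem_singleton.1 ha ▸ hab)
    rcases mem_union.1 hb with hb | hb
    · exact hv a (mem_singleton.1 hb ▸ hab.symm)
    exact hQ c hc a ha b hb hab
  · rintro ⟨Q, c⟩ h ⟨Q', c'⟩ h' heq
    obtain ⟨⟨-, hvQ⟩, hc⟩ := mem_sigma_iff.1 h
    obtain ⟨⟨-, hvQ'⟩, hc'⟩ := mem_sigma_iff.1 h'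
    dsimp only at heq
    obtain rfl : Q = Q' := by
      rw [← carve_union_carve hvQ hc, heq, carve_union_carve hvQ' hc']
    have : {v} ∪ c = {v} ∪ c' := by
      have := congrArg (·.part v) heq
      rwa [part_carve_of_mem (v_mem c), part_carve_of_mem (v_mem c')] at this
    rw [eq_of_union_eq_union hvQ hc hc' this]
  · intro P hP
    obtain ⟨c, hc, hcP⟩ := P.exists_mem_carve_singleton_union_eq (a := v)
    have hQ : IsStablePartition G (P.carve {v}) :=
      (mem_filter.1 hP).2.carve fun a ha b hb => by
        rw [mem_singleton] at ha hb
        subst ha hb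
        exact G.irrefl
    refine ⟨⟨P.carve {v}, c⟩, mem_sigma_iff.2 ⟨⟨hQ, ?_⟩, hc⟩, ?_⟩
    · exact mem_carve.2 ⟨singleton_ne_empty v, .inl rfl⟩
    · dsimp only
      rw [hcP, carve_carve_of_subset (singleton_subset_iff.2 (P.mem_part (mem_univ v))),
        carve_of_mem (P.part_mem.2 (mem_univ v))]

theorem sum_stablePartitions_sup_edge_eq_sum_carve {M : Type*} [AddCommMonoid M] (huv : u ≠ v)
    (hv : ∀ x, ¬G.Adj v x) (f : Finpartition (univ : Finset V) → M) :
    ∑ P ∈ univ.filter (IsStablePartition (G ⊔ edge u v)), f P =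
      ∑ Q ∈ stablePartitionsWithSingleton G v,
        ∑ c ∈ Q.parts.filter (u ∉ ·), f (Q.carve ({v} ∪ c)) := by
  have : univ.filter (IsStablePartition (G ⊔ edge u v)) =
      (univ.filter (IsStablePartition G)).filter (u ∉ ·.part v) := by
    ext P
    simp [isStablePartition_sup_edge_iff huv]
  rw [this, sum_filter, sum_stablePartitions_eq_sum_carve hv]
  refine sum_congr rfl fun Q _ => ?_
  rw [sum_filter]
  refine sum_congr rfl fun c _ => ?_
  rw [part_carve_of_mem (mem_union_left c (mem_singleton_self v))]
  simp [huv]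

theorem colB_pos (G : SimpleGraph V) : 0 < colB G :=
  card_pos.2 ⟨⊥, mem_filter.2 ⟨mem_univ _, isStablePartition_bot G⟩⟩

theorem colB_eq_sum (hv : ∀ x, ¬G.Adj v x) :
    colB G = ∑ Q ∈ stablePartitionsWithSingleton G v, (#(Q.parts.erase {v}) + 1) := by
  rw [colB, card_eq_sum_ones, sum_stablePartitions_eq_sum_carve hv]
  refine sum_congr rfl fun Q hQ => ?_
  rw [sum_const, smul_eq_mul, mul_one,
    card_erase_add_one (mem_stablePartitionsWithSingleton.1 hQ).2]

theorem colT_eq_sum (hv : ∀ x, ¬G.Adj v x) :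
    colT G = ∑ Q ∈ stablePartitionsWithSingleton G v,
      ((#(Q.parts.erase {v}) + 1) * #(Q.parts.erase {v}) + 1) := by
  rw [colT, sum_stablePartitions_eq_sum_carve hv]
  refine sum_congr rfl fun Q hQ => ?_
  have hvQ := (mem_stablePartitionsWithSingleton.1 hQ).2
  rw [sum_card_parts_carve_union hvQ subset_rfl hvQ, card_erase_add_one hvQ]

theorem colB_sup_edge_eq_sum (huv : u ≠ v) (hv : ∀ x, ¬G.Adj v x) :
    colB (G ⊔ edge u v) = ∑ Q ∈ stablePartitionsWithSingleton G v, #(Q.parts.erase {v}) := by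
  rw [colB, card_eq_sum_ones, sum_stablePartitions_sup_edge_eq_sum_carve huv hv]
  refine sum_congr rfl fun Q hQ => ?_
  have := card_erase_add_one (mem_stablePartitionsWithSingleton.1 hQ).2
  have := Q.card_filter_notMem_parts u
  rw [sum_const, smul_eq_mul, mul_one]
  omega

theorem colT_sup_edge_eq_sum (huv : u ≠ v) (hv : ∀ x, ¬G.Adj v x) :
    colT (G ⊔ edge u v) = ∑ Q ∈ stablePartitionsWithSingleton G v,
      (#(Q.parts.erase {v}) * #(Q.parts.erase {v}) + 1) := by
  rw [colT, sum_stablePartitions_sup_edge_eq_sum_carve huv hv]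
  refine sum_congr rfl fun Q hQ => ?_
  have hvQ := (mem_stablePartitionsWithSingleton.1 hQ).2
  rw [sum_card_parts_carve_union hvQ (filter_subset _ _) (mem_filter.2 ⟨hvQ, by simpa using huv⟩)]
  have := card_erase_add_one hvQ
  have := Q.card_filter_notMem_parts u
  congr 2
  omega

theorem colA_lt_colA_sup_edge (huv : u ≠ v) (hv : ∀ x, ¬G.Adj v x) :
    colA G < colA (G ⊔ edge u v) := by
  have key := sum_mul_sum_lt_sum_mul_sum
    ⟨⊥, bot_mem_stablePartitionsWithSingleton (G := G) (v := v)⟩ fun Q => #(Q.parts.erase {v})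
  rw [← colT_eq_sum hv, ← colB_eq_sum hv, ← colB_sup_edge_eq_sum huv hv,
    ← colT_sup_edge_eq_sum huv hv] at key
  rw [colA, colA, div_lt_div_iff₀ (by exact_mod_cast colB_pos _) (by exact_mod_cast colB_pos _)]
  exact_mod_cast key

end StablePartitions

section Congr

variable {α β : Type*}

def Equiv.finsetOrderIso (e : α ≃ β) : Finset α ≃o Finset β where
  toEquiv := e.finsetCongr
  map_rel_iff' := map_subset_map

@[simp] theorem Equiv.toEquiv_finsetOrderIso (e : α ≃ β) :
    (e.finsetOrderIso : Finset α ≃ Finset β) = e.finsetCongr :=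
  rfl

theorem Equiv.finsetOrderIso_univ [Fintype α] [Fintype β] (e : α ≃ β) :
    e.finsetOrderIso univ = univ :=
  map_univ_equiv e

def Equiv.finpartitionCongr [Fintype α] [DecidableEq α] [Fintype β] [DecidableEq β] (e : α ≃ β) :
    Finpartition (univ : Finset α) ≃ Finpartition (univ : Finset β) where
  toFun P := (P.map e.finsetOrderIso).copy e.finsetOrderIso_univ
  invFun P := (P.map e.symm.finsetOrderIso).copy e.symm.finsetOrderIso_univ
  left_inv P := by ext t; simp [Finset.map_map]
  right_inv P := by ext t; simp [Finset.map_map]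

variable {V W : Type*} [Fintype V] [DecidableEq V] [Fintype W] [DecidableEq W]
  {G : SimpleGraph V} {H : SimpleGraph W}

theorem isStablePartition_finpartitionCongr (φ : G ≃g H) {P : Finpartition (univ : Finset V)} :
    IsStablePartition H (φ.toEquiv.finpartitionCongr P) ↔ IsStablePartition G P := by
  simp only [IsStablePartition, Equiv.finpartitionCongr, Equiv.coe_fn_mk,
    Finpartition.copy_parts, Finpartition.parts_map, Equiv.toEquiv_finsetOrderIso, forall_mem_map,
    Equiv.finsetCongr_apply, Equiv.coe_toEmbedding, RelIso.coe_fn_toEquiv, Iso.map_adj_iff]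

theorem colB_congr (φ : G ≃g H) : colB G = colB H :=
  card_equiv φ.toEquiv.finpartitionCongr fun P => by
    simp [isStablePartition_finpartitionCongr]

theorem colT_congr (φ : G ≃g H) : colT G = colT H :=
  sum_equiv φ.toEquiv.finpartitionCongr (fun P => by simp [isStablePartition_finpartitionCongr])
    fun P _ => by simp [Equiv.finpartitionCongr]

theorem colA_congr (φ : G ≃g H) : colA G = colA H := by
  rw [colA, colA, colB_congr φ, colT_congr φ]

end Congr

section UnionIsolated

variable {W : Type*} {G : SimpleGraph W} {p : ℕ}

@[simp] theorem unionIsolated_adj_inl {a b : W} :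
    (unionIsolated G p).Adj (.inl a) (.inl b) ↔ G.Adj a b := by
  simp only [unionIsolated, fromRel_adj, ne_eq, Sum.inl.injEq]
  constructor
  · rintro ⟨-, ⟨a, b, rfl, rfl, h⟩ | ⟨a, b, rfl, rfl, h⟩⟩
    · exact h
    · exact h.symm
  · intro h
    exact ⟨G.ne_of_adj h, .inl ⟨a, b, rfl, rfl, h⟩⟩

@[simp] theorem not_unionIsolated_adj_inr_left (j : Fin p) (x : W ⊕ Fin p) :
    ¬(unionIsolated G p).Adj (.inr j) x := by
  simp [unionIsolated]

@[simp] theorem not_unionIsolated_adj_inr_right (j : Fin p) (x : W ⊕ Fin p) :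
    ¬(unionIsolated G p).Adj x (.inr j) := by
  simp [unionIsolated]

end UnionIsolated

def pathUnionIsolatedIso (m p : ℕ) :
    unionIsolated (pathGraph (m + 1 + 1)) p ≃g
      unionIsolated (pathGraph (m + 1)) (p + 1) ⊔ edge (.inl (Fin.last m)) (.inr (Fin.last p)) where
  toFun := Sum.elim (Fin.lastCases (.inr (Fin.last p)) .inl) fun j => .inr j.castSucc
  invFun := Sum.elim (fun i => .inl i.castSucc) (Fin.lastCases (.inl (Fin.last (m + 1))) .inr)
  left_inv := by
    rintro (i | j)
    · cases i using Fin.lastCases <;> simp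
    · simp
  right_inv := by
    rintro (i | j)
    · simp
    · cases j using Fin.lastCases <;> simp
  map_rel_iff' := by
    rintro (i | j) (i' | j')
    · cases i using Fin.lastCases <;> cases i' using Fin.lastCases <;>
        simp [edge_adj, pathGraph_adj, Fin.ext_iff] <;> omega
    · cases i using Fin.lastCases <;> simp [edge_adj, Fin.ext_iff, j'.isLt.ne]
    · cases i' using Fin.lastCases <;> simp [edge_adj, Fin.ext_iff, j.isLt.ne]
    · simp [edge_adj, Fin.ext_iff]

/-- For all `n ≥ 1` and `p ≥ 0`, `A(P_n ∪ (p+1)K₁) < A(P_{n+1} ∪ pK₁)`. -/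
theorem stmt_7 (n p : ℕ) (hn : 1 ≤ n) :
    colA (unionIsolated (pathGraph n) (p + 1)) < colA (unionIsolated (pathGraph (n + 1)) p) := by
  obtain ⟨m, rfl⟩ := Nat.exists_eq_add_of_le' hn
  rw [colA_congr (pathUnionIsolatedIso m p)]
  exact colA_lt_colA_sup_edge (by simp) (not_unionIsolated_adj_inr_left _)
end

section
/- For all integers n ≥ 1, B_n^2 < B_{n−1} · B_{n+1}; that is, the sequence of Bell numbers is strictly log-convex. -/
open Finset SimpleGraph

/-!
Adding a new element to a partition with `k` blocks either creates a new singleton block or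
joins one of the `k` blocks. Hence, writing `Tₙ` and `Sₙ` for the sums of `#P.parts` and
`#P.parts ^ 2` over the partitions `P` of an `n`-set, `Bₙ₊₁ = Bₙ + Tₙ` and
`Tₙ₊₁ = Bₙ + Tₙ + Sₙ`. By Cauchy–Schwarz `Tₙ² ≤ Bₙ Sₙ`, so
`Bₙ₊₁² = Bₙ² + 2 Bₙ Tₙ + Tₙ² < Bₙ (2 Bₙ + 2 Tₙ + Sₙ) = Bₙ Bₙ₊₂`.
-/

namespace Finpartition

variable {α : Type*} [DecidableEq α] {s : Finset α} {a : α}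

lemma subset_of_mem_insert_empty (P : Finpartition s) {t : Finset α}
    (ht : t ∈ insert ∅ P.parts) : t ⊆ s := by
  rcases mem_insert.1 ht with rfl | ht
  · exact empty_subset s
  · exact P.le ht

lemma disjoint_of_mem_insert_empty (P : Finpartition s) {t u : Finset α}
    (ht : t ∈ insert ∅ P.parts) (hu : u ∈ P.parts) (htu : u ≠ t) : Disjoint t u := by
  rcases mem_insert.1 ht with rfl | ht
  · exact disjoint_empty_left u
  · exact P.disjoint ht hu htu.symm

/-- For `t = ∅` the new element `a` forms a singleton block, otherwise it joins the block `t`. -/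
def insertInto (P : Finpartition s) (ha : a ∉ s) (t : Finset α) (ht : t ∈ insert ∅ P.parts) :
    Finpartition (insert a s) where
  parts := insert (insert a t) (P.parts.erase t)
  supIndep := by
    rw [supIndep_iff_pairwiseDisjoint, coe_insert]
    refine (P.disjoint.subset (coe_subset.2 (erase_subset t P.parts))).insert fun u hu _ => ?_
    obtain ⟨hut, hu⟩ := mem_erase.1 hu
    exact disjoint_insert_left.2
      ⟨fun hau => ha (P.le hu hau), P.disjoint_of_mem_insert_empty ht hu hut⟩
  sup_parts := by
    ext x
    simp only [sup_insert, id, sup_eq_union, mem_union, mem_insert, mem_sup, mem_erase]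
    constructor
    · rintro ((rfl | hx) | ⟨v, ⟨-, hv⟩, hx⟩)
      · exact Or.inl rfl
      · exact Or.inr (P.subset_of_mem_insert_empty ht hx)
      · exact Or.inr (P.le hv hx)
    · rintro (rfl | hx)
      · exact Or.inl (Or.inl rfl)
      · obtain ⟨v, hv, hxv⟩ := P.exists_mem hx
        by_cases hvt : v = t
        · exact Or.inl (Or.inr (hvt ▸ hxv))
        · exact Or.inr ⟨v, ⟨hvt, hv⟩, hxv⟩
  bot_notMem := by
    simp only [bot_eq_empty, mem_insert, mem_erase, not_or, not_and]
    exact ⟨(insert_ne_empty a t).symm, fun _ => P.empty_notMem_parts⟩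

lemma parts_insertInto (P : Finpartition s) (ha : a ∉ s) (t : Finset α)
    (ht : t ∈ insert ∅ P.parts) :
    (P.insertInto ha t ht).parts = insert (insert a t) (P.parts.erase t) := rfl

lemma card_parts_insertInto (P : Finpartition s) (ha : a ∉ s) (t : Finset α)
    (ht : t ∈ insert ∅ P.parts) :
    #(P.insertInto ha t ht).parts = #(P.parts.erase t) + 1 :=
  card_insert_of_notMem fun h => ha (P.le (mem_erase.1 h).2 (mem_insert_self a t))

lemma part_insertInto (P : Finpartition s) (ha : a ∉ s) (t : Finset α)
    (ht : t ∈ insert ∅ P.parts) : (P.insertInto ha t ht).part a = insert a t :=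
  part_eq_of_mem _ (mem_insert_self _ _) (mem_insert_self a t)

def erase (Q : Finpartition (insert a s)) (ha : a ∉ s) : Finpartition s :=
  (Q.avoid {a}).copy (by rw [sdiff_singleton_eq_erase, erase_insert ha])

lemma mem_parts_erase (Q : Finpartition (insert a s)) (ha : a ∉ s) {c : Finset α} :
    c ∈ (Q.erase ha).parts ↔ c ≠ ∅ ∧ ∃ d ∈ Q.parts, d.erase a = c := by
  simp [Finpartition.erase, avoid, sdiff_singleton_eq_erase]

lemma erase_insertInto (P : Finpartition s) (ha : a ∉ s) (t : Finset α)
    (ht : t ∈ insert ∅ P.parts) : (P.insertInto ha t ht).erase ha = P := by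
  have hat : a ∉ t := fun h => ha (P.subset_of_mem_insert_empty ht h)
  ext c
  rw [mem_parts_erase, parts_insertInto]
  constructor
  · rintro ⟨hne, d, hd, rfl⟩
    rcases mem_insert.1 hd with rfl | hd
    · rw [erase_insert hat] at hne ⊢
      exact (mem_insert.1 ht).resolve_left hne
    · rw [erase_eq_of_notMem fun h => ha (P.le (mem_erase.1 hd).2 h)]
      exact (mem_erase.1 hd).2
  · intro hc
    have hac : a ∉ c := fun h => ha (P.le hc h)
    refine ⟨P.ne_empty hc, ?_⟩
    by_cases hct : c = t
    · exact ⟨insert a c, hct ▸ mem_insert_self _ _, erase_insert hac⟩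
    · exact ⟨c, mem_insert_of_mem (mem_erase.2 ⟨hct, hc⟩), erase_eq_of_notMem hac⟩

lemma part_erase_mem_insert_empty (Q : Finpartition (insert a s)) (ha : a ∉ s) :
    (Q.part a).erase a ∈ insert ∅ (Q.erase ha).parts := by
  rw [mem_insert, mem_parts_erase, or_iff_not_imp_left]
  exact fun hne => ⟨hne, Q.part a, Q.part_mem.2 (mem_insert_self a s), rfl⟩

lemma insertInto_erase (Q : Finpartition (insert a s)) (ha : a ∉ s) :
    (Q.erase ha).insertInto ha _ (Q.part_erase_mem_insert_empty ha) = Q := by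
  have haQ : a ∈ Q.part a := Q.mem_part_self.2 (mem_insert_self a s)
  have hQa : Q.part a ∈ Q.parts := Q.part_mem.2 (mem_insert_self a s)
  ext c
  rw [parts_insertInto, insert_erase haQ, mem_insert, mem_erase, mem_parts_erase]
  constructor
  · rintro (rfl | ⟨hne, -, d, hd, rfl⟩)
    · exact hQa
    · rwa [erase_eq_of_notMem fun h => hne (by rw [Q.part_eq_of_mem hd h])]
  · intro hc
    by_cases hac : a ∈ c
    · exact Or.inl (Q.part_eq_of_mem hc hac).symm
    refine Or.inr ⟨fun h => ?_, Q.ne_empty hc, c, hc, erase_eq_of_notMem hac⟩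
    obtain ⟨x, hx⟩ := Q.nonempty_of_mem_parts hc
    have hcQ : c ≠ Q.part a := fun h' => hac (h' ▸ haQ)
    exact disjoint_left.1 (Q.disjoint hc hQa hcQ) hx (erase_subset a _ (h ▸ hx))

def insertEquiv (ha : a ∉ s) :
    Finpartition (insert a s) ≃ Σ P : Finpartition s, (insert ∅ P.parts : Finset (Finset α)) where
  toFun Q := ⟨Q.erase ha, (Q.part a).erase a, Q.part_erase_mem_insert_empty ha⟩
  invFun x := x.1.insertInto ha x.2 x.2.2
  left_inv Q := Q.insertInto_erase ha
  right_inv x := by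
    refine Sigma.subtype_ext (x.1.erase_insertInto ha x.2 x.2.2) ?_
    have hat : a ∉ (x.2 : Finset α) := fun h => ha (x.1.subset_of_mem_insert_empty x.2.2 h)
    simp only [part_insertInto, erase_insert hat]

end Finpartition

section SumOverFinpartitions

variable {M : Type*} [AddCommMonoid M]

theorem sum_finpartition_insert {α : Type*} [DecidableEq α] {s : Finset α} {a : α} (ha : a ∉ s)
    (f : ℕ → M) :
    ∑ Q : Finpartition (insert a s), f #Q.parts =
      ∑ P : Finpartition s, (f (#P.parts + 1) + #P.parts • f #P.parts) := by
  rw [← (Finpartition.insertEquiv ha).symm.sum_comp, Fintype.sum_sigma]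
  refine Fintype.sum_congr _ _ fun P => ?_
  simp only [Finpartition.insertEquiv, Equiv.coe_fn_symm_mk, Finpartition.card_parts_insertInto]
  rw [sum_coe_sort (insert ∅ P.parts) (fun t => f (#(P.parts.erase t) + 1)),
    sum_insert P.empty_notMem_parts, erase_eq_of_notMem P.empty_notMem_parts,
    sum_congr rfl fun t ht => by rw [card_erase_add_one ht], sum_const]

theorem sum_finpartition_empty {α : Type*} [DecidableEq α] (f : ℕ → M) :
    ∑ P : Finpartition (∅ : Finset α), f #P.parts = f 0 := by
  change ∑ P : Finpartition (⊥ : Finset α), f #P.parts = f 0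
  rw [Fintype.sum_unique, Finpartition.default_eq_empty, Finpartition.empty_parts, card_empty]

theorem sum_finpartition_congr_card {α β : Type*} [DecidableEq α] [DecidableEq β]
    {s : Finset α} {t : Finset β} (h : #s = #t) (f : ℕ → M) :
    ∑ P : Finpartition s, f #P.parts = ∑ P : Finpartition t, f #P.parts := by
  induction s using Finset.induction_on generalizing t f with
  | empty =>
    rw [card_empty, eq_comm, card_eq_zero] at h
    subst h
    rw [sum_finpartition_empty, sum_finpartition_empty]
  | insert a s ha ih =>
    obtain ⟨b, hb⟩ : t.Nonempty := card_pos.1 (h ▸ card_pos.2 (insert_nonempty a s))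
    rw [← insert_erase hb, sum_finpartition_insert ha, sum_finpartition_insert (notMem_erase b t)]
    exact ih (by rw [card_erase_of_mem hb, ← h, card_insert_of_notMem ha, Nat.add_sub_cancel])
      (fun k => f (k + 1) + k • f k)

theorem sum_finpartition_fin_succ (n : ℕ) (f : ℕ → M) :
    ∑ Q : Finpartition (univ : Finset (Fin (n + 1))), f #Q.parts =
      ∑ P : Finpartition (univ : Finset (Fin n)), (f (#P.parts + 1) + #P.parts • f #P.parts) := by
  rw [← insert_erase (mem_univ (0 : Fin (n + 1))), sum_finpartition_insert (notMem_erase _ _)]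
  exact sum_finpartition_congr_card (by simp) (fun k => f (k + 1) + k • f k)

end SumOverFinpartitions

lemma bell_succ (n : ℕ) :
    bell (n + 1) = bell n + ∑ P : Finpartition (univ : Finset (Fin n)), #P.parts := by
  rw [bell, bell, Fintype.card_eq_sum_ones, Fintype.card_eq_sum_ones,
    sum_finpartition_fin_succ n (fun _ => 1), sum_add_distrib]
  simp only [smul_eq_mul, mul_one]

lemma sum_card_parts_fin_succ_eq_bell_add (n : ℕ) :
    ∑ Q : Finpartition (univ : Finset (Fin (n + 1))), #Q.parts =
      bell n + ∑ P : Finpartition (univ : Finset (Fin n)), #P.parts +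
        ∑ P : Finpartition (univ : Finset (Fin n)), #P.parts ^ 2 := by
  rw [bell, Fintype.card_eq_sum_ones, sum_finpartition_fin_succ n (fun k => k),
    ← sum_add_distrib, ← sum_add_distrib]
  exact sum_congr rfl fun _ _ => by rw [smul_eq_mul]; ring

lemma sq_sum_card_parts_le_bell_mul (n : ℕ) :
    (∑ P : Finpartition (univ : Finset (Fin n)), #P.parts) ^ 2 ≤
      bell n * ∑ P : Finpartition (univ : Finset (Fin n)), #P.parts ^ 2 :=
  sq_sum_le_card_mul_sum_sq

/-- The Bell numbers are strictly log-convex: for all `n ≥ 1`, `Bₙ² < B_{n-1} B_{n+1}`. -/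
theorem stmt_9 (n : ℕ) (hn : 1 ≤ n) :
    bell n ^ 2 < bell (n - 1) * bell (n + 1) := by
  obtain ⟨m, rfl⟩ : ∃ m, n = m + 1 := ⟨n - 1, (Nat.sub_add_cancel hn).symm⟩
  have hpos : 0 < bell m := Fintype.card_pos
  have hcs := sq_sum_card_parts_le_bell_mul m
  rw [Nat.add_sub_cancel, bell_succ (m + 1), sum_card_parts_fin_succ_eq_bell_add, bell_succ m]
  nlinarith
end

section
/- For all integers n ≥ 4, B_{n+1} · (B_{n−1} − B_{n−2}) > B_n · (B_n − B_{n−1}), where B_k is the k-th Bell number. -/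
open Finset SimpleGraph

/-!
Deleting a point `a` from a partition of `insert a s` either removes the singleton block `{a}` or
shrinks a block, so `∑_{π ∈ Π(insert a s)} g |π| = ∑_{π ∈ Π(s)} (g (|π| + 1) + |π| g |π|)`.
Iterating from `g = 1` writes `B_{m+j} = ∑_{π ∈ Π([m])} p_j |π|` with `p_0 = 1`, `p_1 = k + 1`,
`p_2 = k² + 2k + 2`, `p_3 = k³ + 3k² + 6k + 5`. For `m = n - 2` the difference of the two sides
becomes a double sum `∑_{π, σ} F |π| |σ|` (`F = bellKernel`) whose symmetrisation
`F x y + F y x = (xy - 3)(x - y)² + 2xy + x + y - 4` is nonnegative on positive integers, while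
`F m m > 0` at the partition into singletons.
-/

namespace Finpartition

variable {α : Type*} [DecidableEq α] {s t : Finset α} {a : α}

lemma notMem_of_mem_parts (ha : a ∉ s) (P : Finpartition s) (ht : t ∈ P.parts) : a ∉ t :=
  fun h ↦ ha (P.le ht h)

def insertSingleton (ha : a ∉ s) (P : Finpartition s) : Finpartition (insert a s) :=
  P.extend (singleton_ne_empty a) (disjoint_singleton_right.2 ha)
    (by rw [sup_eq_union, union_comm, ← insert_eq])

def insertIntoPart (ha : a ∉ s) (P : Finpartition s) (ht : t ∈ P.parts) :
    Finpartition (insert a s) :=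
  (P.ofSubset (erase_subset t P.parts) rfl).extend (insert_ne_empty a t)
    (Finset.disjoint_sup_left.2 fun u hu ↦ disjoint_insert_right.2
      ⟨P.notMem_of_mem_parts ha (mem_of_mem_erase hu),
        P.disjoint (mem_of_mem_erase hu) ht (ne_of_mem_erase hu)⟩)
    (by
      have h := P.sup_parts
      rw [← insert_erase ht, sup_insert] at h
      conv_rhs => rw [← h]
      rw [sup_eq_union, sup_eq_union, union_comm, insert_union, id])

def eraseInsert (ha : a ∉ s) (P : Finpartition (insert a s)) : Finpartition s :=
  (P.avoid {a}).copy (by simpa [insert_sdiff_of_mem] using ha)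

@[simp] lemma insertSingleton_parts (ha : a ∉ s) (P : Finpartition s) :
    (P.insertSingleton ha).parts = insert {a} P.parts := rfl

@[simp] lemma insertIntoPart_parts (ha : a ∉ s) (P : Finpartition s) (ht : t ∈ P.parts) :
    (P.insertIntoPart ha ht).parts = insert (insert a t) (P.parts.erase t) := rfl

lemma mem_eraseInsert_parts (ha : a ∉ s) (P : Finpartition (insert a s)) {u : Finset α} :
    u ∈ (P.eraseInsert ha).parts ↔ u ≠ ∅ ∧ ∃ v ∈ P.parts, v.erase a = u := by
  simp [eraseInsert, avoid, sdiff_singleton_eq_erase]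

lemma part_insertSingleton (ha : a ∉ s) (P : Finpartition s) :
    (P.insertSingleton ha).part a = {a} :=
  part_eq_of_mem _ (by simp) (mem_singleton_self a)

lemma part_insertIntoPart (ha : a ∉ s) (P : Finpartition s) (ht : t ∈ P.parts) :
    (P.insertIntoPart ha ht).part a = insert a t :=
  part_eq_of_mem _ (by simp) (mem_insert_self a t)

lemma card_insertSingleton (ha : a ∉ s) (P : Finpartition s) :
    #(P.insertSingleton ha).parts = #P.parts + 1 :=
  card_extend ..

lemma card_insertIntoPart (ha : a ∉ s) (P : Finpartition s) (ht : t ∈ P.parts) :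
    #(P.insertIntoPart ha ht).parts = #P.parts := by
  rw [insertIntoPart_parts, card_insert_of_notMem, card_erase_add_one ht]
  exact fun h ↦ P.notMem_of_mem_parts ha (mem_of_mem_erase h) (mem_insert_self a t)

lemma eraseInsert_insertSingleton (ha : a ∉ s) (P : Finpartition s) :
    (P.insertSingleton ha).eraseInsert ha = P := by
  ext u
  rw [mem_eraseInsert_parts, insertSingleton_parts]
  constructor
  · rintro ⟨hu, v, hv, rfl⟩
    rcases mem_insert.1 hv with rfl | hv
    · simp at hu
    · rwa [erase_eq_of_notMem (P.notMem_of_mem_parts ha hv)]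
  · intro hu
    exact ⟨P.ne_empty hu, u, mem_insert_of_mem hu,
      erase_eq_of_notMem (P.notMem_of_mem_parts ha hu)⟩

lemma eraseInsert_insertIntoPart (ha : a ∉ s) (P : Finpartition s) (ht : t ∈ P.parts) :
    (P.insertIntoPart ha ht).eraseInsert ha = P := by
  ext u
  rw [mem_eraseInsert_parts, insertIntoPart_parts]
  constructor
  · rintro ⟨hu, v, hv, rfl⟩
    rcases mem_insert.1 hv with rfl | hv
    · rwa [erase_insert (P.notMem_of_mem_parts ha ht)]
    · rw [erase_eq_of_notMem (P.notMem_of_mem_parts ha (mem_of_mem_erase hv))]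
      exact mem_of_mem_erase hv
  · intro hu
    by_cases hut : u = t
    · subst hut
      exact ⟨P.ne_empty hu, _, mem_insert_self _ _, erase_insert (P.notMem_of_mem_parts ha hu)⟩
    · exact ⟨P.ne_empty hu, u, mem_insert_of_mem (mem_erase.2 ⟨hut, hu⟩),
        erase_eq_of_notMem (P.notMem_of_mem_parts ha hu)⟩

section EraseInsert

variable (ha : a ∉ s) (P : Finpartition (insert a s))

lemma insertSingleton_eraseInsert (h : P.part a = {a}) :
    (P.eraseInsert ha).insertSingleton ha = P := by
  ext u
  rw [insertSingleton_parts, mem_insert, mem_eraseInsert_parts]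
  constructor
  · rintro (rfl | ⟨hu, v, hv, rfl⟩)
    · rw [← h]
      exact P.part_mem.2 (mem_insert_self a s)
    · by_cases hav : a ∈ v
      · rw [← P.part_eq_of_mem hv hav, h, erase_singleton] at hu
        exact absurd rfl hu
      · rwa [erase_eq_of_notMem hav]
  · intro hu
    by_cases hau : a ∈ u
    · exact Or.inl (h ▸ (P.part_eq_of_mem hu hau).symm)
    · exact Or.inr ⟨P.ne_empty hu, u, hu, erase_eq_of_notMem hau⟩

lemma erase_part_mem_eraseInsert (h : P.part a ≠ {a}) :
    (P.part a).erase a ∈ (P.eraseInsert ha).parts := by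
  refine (mem_eraseInsert_parts ha P).2 ⟨?_, _, P.part_mem.2 (mem_insert_self a s), rfl⟩
  rw [Ne, erase_eq_empty_iff, not_or]
  exact ⟨(P.part_nonempty.2 (mem_insert_self a s)).ne_empty, h⟩

lemma insertIntoPart_eraseInsert (h : P.part a ≠ {a}) :
    (P.eraseInsert ha).insertIntoPart ha (P.erase_part_mem_eraseInsert ha h) = P := by
  have haP : a ∈ P.part a := P.mem_part (mem_insert_self a s)
  ext u
  rw [insertIntoPart_parts, insert_erase haP, mem_insert, mem_erase, mem_eraseInsert_parts]
  constructor
  · rintro (rfl | ⟨hne, hu, v, hv, rfl⟩)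
    · exact P.part_mem.2 (mem_insert_self a s)
    · by_cases hav : a ∈ v
      · rw [P.part_eq_of_mem hv hav] at hne
        exact absurd rfl hne
      · rwa [erase_eq_of_notMem hav]
  · intro hu
    by_cases hau : a ∈ u
    · exact Or.inl (P.part_eq_of_mem hu hau).symm
    · refine Or.inr ⟨fun hu' ↦ ?_, P.ne_empty hu, u, hu, erase_eq_of_notMem hau⟩
      obtain ⟨x, hx⟩ := P.nonempty_of_mem_parts hu
      have hxP : x ∈ P.part a := mem_of_mem_erase (hu' ▸ hx)
      exact hau (P.eq_of_mem_parts hu (P.part_mem.2 (mem_insert_self a s)) hx hxP ▸ haP)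

end EraseInsert

end Finpartition

section PartitionSum

variable {α β M : Type*} [DecidableEq α] [DecidableEq β] [AddCommMonoid M]

namespace Finpartition

variable {s : Finset α} {a : α}

lemma sum_filter_part_eq_singleton (g : ℕ → M) (ha : a ∉ s) :
    ∑ P : Finpartition (insert a s) with P.part a = {a}, g #P.parts =
      ∑ P : Finpartition s, g (#P.parts + 1) := by
  refine sum_bij' (fun P _ ↦ P.eraseInsert ha) (fun P _ ↦ P.insertSingleton ha)
    (fun _ _ ↦ mem_univ _) (fun P _ ↦ ?_) (fun P hP ↦ ?_) (fun P _ ↦ ?_) (fun P hP ↦ ?_)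
  · simp [part_insertSingleton]
  · exact P.insertSingleton_eraseInsert ha (mem_filter.1 hP).2
  · exact P.eraseInsert_insertSingleton ha
  · conv_lhs => rw [← P.insertSingleton_eraseInsert ha (mem_filter.1 hP).2]
    rw [card_insertSingleton]

lemma sum_filter_part_ne_singleton (g : ℕ → M) (ha : a ∉ s) :
    ∑ P : Finpartition (insert a s) with P.part a ≠ {a}, g #P.parts =
      ∑ P : Finpartition s, #P.parts • g #P.parts := by
  have hsigma : ∑ P : Finpartition s, #P.parts • g #P.parts =
      ∑ x ∈ univ.sigma fun P : Finpartition s ↦ P.parts, g #x.1.parts := by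
    rw [sum_sigma]
    simp only [sum_const]
  rw [hsigma]
  refine sum_bij' (fun P _ ↦ ⟨P.eraseInsert ha, (P.part a).erase a⟩)
    (fun x hx ↦ x.1.insertIntoPart ha (mem_sigma.1 hx).2)
    (fun P hP ↦ mem_sigma.2 ⟨mem_univ _, P.erase_part_mem_eraseInsert ha (mem_filter.1 hP).2⟩)
    (fun x hx ↦ ?_) (fun P hP ↦ P.insertIntoPart_eraseInsert ha (mem_filter.1 hP).2)
    (fun x hx ↦ ?_) (fun P hP ↦ ?_)
  · obtain ⟨P, t⟩ := x
    have ht : t ∈ P.parts := (mem_sigma.1 hx).2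
    refine mem_filter.2 ⟨mem_univ _, fun h ↦ ?_⟩
    rw [part_insertIntoPart] at h
    obtain ⟨b, hb⟩ := P.nonempty_of_mem_parts ht
    have hba : b = a := mem_singleton.1 (h ▸ mem_insert_of_mem hb)
    exact P.notMem_of_mem_parts ha ht (hba ▸ hb)
  · obtain ⟨P, t⟩ := x
    have ht : t ∈ P.parts := (mem_sigma.1 hx).2
    refine Sigma.ext (P.eraseInsert_insertIntoPart ha ht) (heq_of_eq ?_)
    rw [part_insertIntoPart, erase_insert (P.notMem_of_mem_parts ha ht)]
  · conv_lhs => rw [← P.insertIntoPart_eraseInsert ha (mem_filter.1 hP).2]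
    rw [card_insertIntoPart]

end Finpartition

def partitionSum (g : ℕ → M) (s : Finset α) : M :=
  ∑ P : Finpartition s, g #P.parts

def insertStep (g : ℕ → M) (k : ℕ) : M :=
  g (k + 1) + k • g k

lemma partitionSum_insert (g : ℕ → M) {s : Finset α} {a : α} (ha : a ∉ s) :
    partitionSum g (insert a s) = partitionSum (insertStep g) s := by
  rw [partitionSum, ← sum_filter_add_sum_filter_not univ (fun P ↦ P.part a = {a}),
    Finpartition.sum_filter_part_eq_singleton g ha,
    Finpartition.sum_filter_part_ne_singleton g ha, partitionSum, ← sum_add_distrib]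
  rfl

lemma partitionSum_empty (g : ℕ → M) : partitionSum g (∅ : Finset α) = g 0 := by
  show ∑ P : Finpartition (⊥ : Finset α), g #P.parts = g 0
  rw [Fintype.sum_unique, Finpartition.default_eq_empty]
  rfl

lemma partitionSum_eq_of_card_eq (g : ℕ → M) {s : Finset α} {t : Finset β} (h : #s = #t) :
    partitionSum g s = partitionSum g t := by
  induction s using Finset.induction_on generalizing g t with
  | empty =>
    rw [card_empty, eq_comm, card_eq_zero] at h
    rw [h, partitionSum_empty, partitionSum_empty]
  | insert a s ha ih =>
    obtain ⟨b, hb⟩ : t.Nonempty := by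
      rw [← card_pos, ← h]
      exact card_pos.2 (insert_nonempty a s)
    rw [← insert_erase hb, partitionSum_insert g ha, partitionSum_insert g (notMem_erase b t)]
    exact ih _ (by rw [card_erase_of_mem hb, ← h, card_insert_of_notMem ha, Nat.add_sub_cancel])

lemma partitionSum_fin_succ (g : ℕ → M) (m : ℕ) :
    partitionSum g (univ : Finset (Fin (m + 1))) =
      partitionSum (insertStep g) (univ : Finset (Fin m)) := by
  rw [← insert_erase (mem_univ (0 : Fin (m + 1))), partitionSum_insert g (notMem_erase _ _)]
  exact partitionSum_eq_of_card_eq _ (by simp)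

lemma partitionSum_fin_add (g : ℕ → M) (m j : ℕ) :
    partitionSum g (univ : Finset (Fin (m + j))) =
      partitionSum (insertStep^[j] g) (univ : Finset (Fin m)) := by
  induction j generalizing g with
  | zero => rfl
  | succ j ih => rw [← add_assoc, partitionSum_fin_succ, ih, Function.iterate_succ_apply]

end PartitionSum

lemma bell_add_eq_partitionSum (m j : ℕ) :
    (bell (m + j) : ℤ) = partitionSum (insertStep^[j] fun _ ↦ 1) (univ : Finset (Fin m)) := by
  rw [← partitionSum_fin_add, bell, Fintype.card_eq_sum_ones, Nat.cast_sum]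
  rfl

lemma bell_eq_sum (m : ℕ) :
    (bell m : ℤ) = ∑ _P : Finpartition (univ : Finset (Fin m)), 1 :=
  bell_add_eq_partitionSum m 0

lemma bell_add_one_eq_sum (m : ℕ) :
    (bell (m + 1) : ℤ) = ∑ P : Finpartition (univ : Finset (Fin m)), ((#P.parts : ℤ) + 1) := by
  rw [bell_add_eq_partitionSum m 1, partitionSum]
  simp [insertStep, add_comm]

lemma bell_add_two_eq_sum (m : ℕ) :
    (bell (m + 2) : ℤ) =
      ∑ P : Finpartition (univ : Finset (Fin m)), ((#P.parts : ℤ) ^ 2 + 2 * #P.parts + 2) := by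
  rw [bell_add_eq_partitionSum m 2, partitionSum]
  congr! 1 with P
  simp [insertStep]
  ring

lemma bell_add_three_eq_sum (m : ℕ) :
    (bell (m + 3) : ℤ) = ∑ P : Finpartition (univ : Finset (Fin m)),
      ((#P.parts : ℤ) ^ 3 + 3 * #P.parts ^ 2 + 6 * #P.parts + 5) := by
  rw [bell_add_eq_partitionSum m 3, partitionSum]
  congr! 1 with P
  simp [insertStep]
  ring

lemma sum_sum_pos_of_add_swap {ι M : Type*} [AddCommMonoid M] [LinearOrder M]
    [IsOrderedCancelAddMonoid M] (s : Finset ι) (F : ι → ι → M)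
    (hF : ∀ i ∈ s, ∀ j ∈ s, 0 ≤ F i j + F j i) (hpos : ∃ i ∈ s, 0 < F i i) :
    0 < ∑ i ∈ s, ∑ j ∈ s, F i j := by
  have hsymm : ∑ i ∈ s, ∑ j ∈ s, F i j + ∑ i ∈ s, ∑ j ∈ s, F i j =
      ∑ i ∈ s, ∑ j ∈ s, (F i j + F j i) := by
    simp only [sum_add_distrib]
    rw [sum_comm (f := fun i j ↦ F j i)]
  obtain ⟨i₀, hi₀, hF₀⟩ := hpos
  have hsum : 0 < ∑ i ∈ s, ∑ j ∈ s, (F i j + F j i) :=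
    sum_pos' (fun i hi ↦ sum_nonneg fun j hj ↦ hF i hi j hj)
      ⟨i₀, hi₀, sum_pos' (fun j hj ↦ hF i₀ hi₀ j hj) ⟨i₀, hi₀, add_pos hF₀ hF₀⟩⟩
  by_contra! hnonpos
  exact (hsymm ▸ hsum).not_ge (add_nonpos hnonpos hnonpos)

def bellKernel (x y : ℤ) : ℤ :=
  (x ^ 3 + 3 * x ^ 2 + 6 * x + 5) * y - (x ^ 2 + 2 * x + 2) * (y ^ 2 + y + 1)

lemma bellKernel_add_swap (x y : ℤ) :
    bellKernel x y + bellKernel y x = (x * y - 3) * (x - y) ^ 2 + 2 * x * y + x + y - 4 := by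
  unfold bellKernel
  ring

lemma bellKernel_add_swap_nonneg {x y : ℤ} (hx : 1 ≤ x) (hy : 1 ≤ y) :
    0 ≤ bellKernel x y + bellKernel y x := by
  rw [bellKernel_add_swap]
  rcases hx.eq_or_lt with rfl | hx
  · nlinarith [sq_nonneg (y - 2)]
  rcases hy.eq_or_lt with rfl | hy
  · nlinarith [sq_nonneg (x - 2)]
  nlinarith [mul_nonneg (by nlinarith : (0 : ℤ) ≤ x * y - 3) (sq_nonneg (x - y))]

lemma bellKernel_self_pos {x : ℤ} (hx : 2 ≤ x) : 0 < bellKernel x x := by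
  unfold bellKernel
  nlinarith

lemma bell_inequality_of_moments {ι : Type*} (s : Finset ι) (k : ι → ℤ) (hk : ∀ i ∈ s, 1 ≤ k i)
    (h2 : ∃ i ∈ s, 2 ≤ k i) :
    (∑ i ∈ s, (k i ^ 2 + 2 * k i + 2)) * (∑ i ∈ s, (k i ^ 2 + 2 * k i + 2) - ∑ i ∈ s, (k i + 1))
      < (∑ i ∈ s, (k i ^ 3 + 3 * k i ^ 2 + 6 * k i + 5)) * (∑ i ∈ s, (k i + 1) - ∑ _i ∈ s, 1) := by
  rw [← sub_pos, ← sum_sub_distrib, ← sum_sub_distrib, sum_mul_sum, sum_mul_sum,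
    ← sum_sub_distrib]
  simp_rw [← sum_sub_distrib]
  obtain ⟨i₀, hi₀, hki₀⟩ := h2
  refine (sum_sum_pos_of_add_swap s (fun i j ↦ bellKernel (k i) (k j))
    (fun i hi j hj ↦ bellKernel_add_swap_nonneg (hk i hi) (hk j hj))
    ⟨i₀, hi₀, bellKernel_self_pos hki₀⟩).trans_eq ?_
  refine sum_congr rfl fun i _ ↦ sum_congr rfl fun j _ ↦ ?_
  unfold bellKernel
  ring

/-- For all `n ≥ 4`, `B_{n+1}(B_{n-1} - B_{n-2}) > B_n(B_n - B_{n-1})`. -/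
theorem stmt_12 (n : ℕ) (hn : 4 ≤ n) :
    (bell (n + 1) : ℤ) * ((bell (n - 1) : ℤ) - bell (n - 2)) >
      (bell n : ℤ) * ((bell n : ℤ) - bell (n - 1)) := by
  obtain ⟨m, rfl⟩ : ∃ m, n = m + 2 := ⟨n - 2, by omega⟩
  rw [show m + 2 + 1 = m + 3 by omega, show m + 2 - 1 = m + 1 by omega, Nat.add_sub_cancel,
    bell_add_three_eq_sum, bell_add_two_eq_sum, bell_add_one_eq_sum, bell_eq_sum]
  have hm : (univ : Finset (Fin m)).Nonempty := univ_nonempty_iff.2 ⟨⟨0, by omega⟩⟩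
  have hk (P : Finpartition (univ : Finset (Fin m))) : 1 ≤ (#P.parts : ℤ) := by
    exact_mod_cast (P.parts_nonempty hm.ne_empty).card_pos
  have hbot : 2 ≤ (#(⊥ : Finpartition (univ : Finset (Fin m))).parts : ℤ) := by
    rw [Finpartition.card_bot, card_univ, Fintype.card_fin]
    omega
  exact bell_inequality_of_moments (univ : Finset (Finpartition (univ : Finset (Fin m))))
    (fun P ↦ (#P.parts : ℤ)) (fun P _ ↦ hk P) ⟨⊥, mem_univ _, hbot⟩
end
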